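/- Suppose Ω_- and Ω_+ have the same real part (Re Ω_- = Re Ω_+), the scattering matrix S is purely imaginary, and the coupling matrices C_-, C_+ are real. Then for every s ∈ ℂ such that s·I_{2n} - A is invertible, the top-left block of the quadrature transfer function vanishes: G_qq[s] = 0, i.e., a BAE measurement of q_out with respect to q_in is realized. -/

import Mathlib

open Matrix Complex

noncomputable section

/-- Entrywise real part of a complex matrix, viewed as a complex matrix. -/
def reM {α β : Type*} (M : Matrix α β ℂ) : Matrix α β ℂ :=
  M.map fun z => (z.re : ℂ)

/-- Entrywise imaginary part of a complex matrix, viewed as a complex matrix. -/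
def imM {α β : Type*} (M : Matrix α β ℂ) : Matrix α β ℂ :=
  M.map fun z => (z.im : ℂ)

/-- The quadrature scattering matrix `D = [[Re S, -Im S],[Im S, Re S]]`. -/
def QD {m : ℕ} (S : Matrix (Fin m) (Fin m) ℂ) :
    Matrix (Fin m ⊕ Fin m) (Fin m ⊕ Fin m) ℂ :=
  fromBlocks (reM S) (-(imM S)) (imM S) (reM S)

/-- The quadrature coupling matrix
`C = [[Re(C₋+C₊), -Im(C₋-C₊)],[Im(C₋+C₊), Re(C₋-C₊)]]`. -/
def QC {m n : ℕ} (Cm Cp : Matrix (Fin m) (Fin n) ℂ) :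
    Matrix (Fin m ⊕ Fin m) (Fin n ⊕ Fin n) ℂ :=
  fromBlocks (reM (Cm + Cp)) (-(imM (Cm - Cp))) (imM (Cm + Cp)) (reM (Cm - Cp))

/-- The quadrature input matrix
`B = -[[Re(C₋†-C₊†), -Im(C₋†-C₊†)],[Im(C₋†+C₊†), Re(C₋†+C₊†)]] · D`. -/
def QB {m n : ℕ} (Cm Cp : Matrix (Fin m) (Fin n) ℂ) (S : Matrix (Fin m) (Fin m) ℂ) :
    Matrix (Fin n ⊕ Fin n) (Fin m ⊕ Fin m) ℂ :=
  -(fromBlocks (reM (Cmᴴ - Cpᴴ)) (-(imM (Cmᴴ - Cpᴴ)))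
      (imM (Cmᴴ + Cpᴴ)) (reM (Cmᴴ + Cpᴴ)) * QD S)

/-- `JH = [[Im(Ω₋+Ω₊), Re(Ω₋-Ω₊)],[-Re(Ω₋+Ω₊), Im(Ω₋-Ω₊)]]`. -/
def QJH {n : ℕ} (Om Op : Matrix (Fin n) (Fin n) ℂ) :
    Matrix (Fin n ⊕ Fin n) (Fin n ⊕ Fin n) ℂ :=
  fromBlocks (imM (Om + Op)) (reM (Om - Op)) (-(reM (Om + Op))) (imM (Om - Op))

/-- `𝕁ₖ = [[0, Iₖ],[-Iₖ, 0]]`. -/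
def QJ (k : ℕ) : Matrix (Fin k ⊕ Fin k) (Fin k ⊕ Fin k) ℂ :=
  fromBlocks 0 1 (-1) 0

/-- `C♯ = -𝕁ₙ · C† · 𝕁ₘ`. -/
def QCsharp {m n : ℕ} (Cm Cp : Matrix (Fin m) (Fin n) ℂ) :
    Matrix (Fin n ⊕ Fin n) (Fin m ⊕ Fin m) ℂ :=
  -(QJ n * (QC Cm Cp)ᴴ * QJ m)

/-- `A = JH - (1/2) · C♯ · C`. -/
def QA {m n : ℕ} (Cm Cp : Matrix (Fin m) (Fin n) ℂ) (Om Op : Matrix (Fin n) (Fin n) ℂ) :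
    Matrix (Fin n ⊕ Fin n) (Fin n ⊕ Fin n) ℂ :=
  QJH Om Op - (1/2 : ℂ) • (QCsharp Cm Cp * QC Cm Cp)

/-- The quadrature transfer function `G[s] = D + C (sI - A)⁻¹ B`. -/
def QG {m n : ℕ} (Cm Cp : Matrix (Fin m) (Fin n) ℂ) (Om Op : Matrix (Fin n) (Fin n) ℂ)
    (S : Matrix (Fin m) (Fin m) ℂ) (s : ℂ) :
    Matrix (Fin m ⊕ Fin m) (Fin m ⊕ Fin m) ℂ :=
  QD S + QC Cm Cp *
    (s • (1 : Matrix (Fin n ⊕ Fin n) (Fin n ⊕ Fin n) ℂ) - QA Cm Cp Om Op)⁻¹ * QB Cm Cp S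

section Aux

variable {α β : Type*}

lemma imM_add (M N : Matrix α β ℂ) : imM (M + N) = imM M + imM N := by
  ext i j; simp [imM]

lemma imM_sub (M N : Matrix α β ℂ) : imM (M - N) = imM M - imM N := by
  ext i j; simp [imM]

lemma reM_sub (M N : Matrix α β ℂ) : reM (M - N) = reM M - reM N := by
  ext i j; simp [reM]

lemma reM_eq_self {M : Matrix α β ℂ} (h : imM M = 0) : reM M = M := by
  ext i j
  have h' := congrFun (congrFun h i) j
  simp only [imM, Matrix.map_apply, Matrix.zero_apply, Complex.ofReal_eq_zero] at h'
  simp only [reM, Matrix.map_apply]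
  exact Complex.ext (by simp) (by simp [h'])

lemma imM_conjTranspose (M : Matrix α β ℂ) : imM Mᴴ = -(imM M)ᵀ := by
  ext i j; simp [imM, Matrix.conjTranspose_apply]

lemma conjTranspose_eq_transpose {M : Matrix α β ℂ} (h : imM M = 0) : Mᴴ = Mᵀ := by
  ext i j
  have h' := congrFun (congrFun h j) i
  simp only [imM, Matrix.map_apply, Matrix.zero_apply, Complex.ofReal_eq_zero] at h'
  simp only [Matrix.conjTranspose_apply, Matrix.transpose_apply]
  exact Complex.ext (by simp) (by simp [h'])

lemma fromBlocks_sub {l m n o : Type*} (A : Matrix n l ℂ) (B : Matrix n m ℂ)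
    (C : Matrix o l ℂ) (D : Matrix o m ℂ) (A' : Matrix n l ℂ) (B' : Matrix n m ℂ)
    (C' : Matrix o l ℂ) (D' : Matrix o m ℂ) :
    Matrix.fromBlocks A B C D - Matrix.fromBlocks A' B' C' D' =
      Matrix.fromBlocks (A - A') (B - B') (C - C') (D - D') := by
  ext i j; cases i <;> cases j <;> simp [Matrix.fromBlocks]

end Aux

/-- Re Ω₋ = Re Ω₊, S purely imaginary, C₋, C₊ real ⟹ G_qq[s] = 0. -/
theorem stmt5 {m n : ℕ} (Cm Cp : Matrix (Fin m) (Fin n) ℂ)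
    (Om Op : Matrix (Fin n) (Fin n) ℂ)
    (S : Matrix (Fin m) (Fin m) ℂ)
    (hOmHerm : Omᴴ = Om) (hOpSymm : Opᵀ = Op)
    (hRe : reM Om = reM Op) (hS : reM S = 0) (hCm : imM Cm = 0) (hCp : imM Cp = 0)
    (s : ℂ)
    (hs : IsUnit (s • (1 : Matrix (Fin n ⊕ Fin n) (Fin n ⊕ Fin n) ℂ) - QA Cm Cp Om Op)) :
    (QG Cm Cp Om Op S s).toBlocks₁₁ = 0 := by
  classical
  set T := imM S with hT
  set X := Cm + Cp with hX
  set Y := Cm - Cp with hY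
  have himX : imM X = 0 := by rw [hX, imM_add, hCm, hCp, add_zero]
  have himY : imM Y = 0 := by rw [hY, imM_sub, hCm, hCp, sub_zero]
  -- QC in block form
  have hQC : QC Cm Cp = fromBlocks X 0 0 Y := by
    rw [QC, reM_eq_self himX, reM_eq_self himY, himX, himY, neg_zero]
  -- QD in block form
  have hQD : QD S = fromBlocks 0 (-T) T 0 := by rw [QD, hS]
  -- QB in block form
  have himXH : imM Xᴴ = 0 := by rw [imM_conjTranspose, himX]; simp
  have himYH : imM Yᴴ = 0 := by rw [imM_conjTranspose, himY]; simp
  have hQB : QB Cm Cp S = fromBlocks 0 (Yᴴ * T) (-(Xᴴ * T)) 0 := by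
    have h1 : Cmᴴ - Cpᴴ = Yᴴ := by rw [hY]; simp
    have h2 : Cmᴴ + Cpᴴ = Xᴴ := by rw [hX]; simp
    rw [QB, h1, h2, hQD, reM_eq_self himXH, reM_eq_self himYH, himXH, himYH, neg_zero]
    rw [Matrix.fromBlocks_multiply]
    simp [Matrix.fromBlocks_neg]
  -- QCsharp in block form
  have hQCs : QCsharp Cm Cp = fromBlocks Yᴴ 0 0 Xᴴ := by
    rw [QCsharp, hQC, QJ, QJ, Matrix.fromBlocks_conjTranspose]
    rw [Matrix.fromBlocks_multiply, Matrix.fromBlocks_multiply]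
    simp [Matrix.fromBlocks_neg]
  -- A in block form with zero top-right block
  have hQA : QA Cm Cp Om Op =
      fromBlocks (imM (Om + Op) - (1/2 : ℂ) • (Yᴴ * X)) 0
        (-(reM (Om + Op)) - (1/2 : ℂ) • 0) (imM (Om - Op) - (1/2 : ℂ) • (Xᴴ * Y)) := by
    have hre : reM (Om - Op) = 0 := by rw [reM_sub, hRe, sub_self]
    rw [QA, QJH, hre, hQCs, hQC, Matrix.fromBlocks_multiply]
    simp only [Matrix.mul_zero, Matrix.zero_mul, add_zero, zero_add,
      Matrix.fromBlocks_smul, smul_zero]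
    rw [fromBlocks_sub]
    simp
  -- the resolvent matrix
  set M := s • (1 : Matrix (Fin n ⊕ Fin n) (Fin n ⊕ Fin n) ℂ) - QA Cm Cp Om Op with hM
  set a := (imM (Om + Op) - (1/2 : ℂ) • (Yᴴ * X)) with ha
  have hMblocks : M = fromBlocks (s • 1 - a)
      0 (-(-(reM (Om + Op)) - (1/2 : ℂ) • 0)) (s • 1 - (imM (Om - Op) - (1/2 : ℂ) • (Xᴴ * Y))) := by
    rw [hM, hQA, ← Matrix.fromBlocks_one, Matrix.fromBlocks_smul, fromBlocks_sub]
    simp [ha]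
  have hdet : IsUnit M.det := (Matrix.isUnit_iff_isUnit_det M).mp hs
  have hdet11 : IsUnit (s • 1 - a).det := by
    have := hdet
    rw [hMblocks, Matrix.det_fromBlocks_zero₁₂] at this
    exact isUnit_of_mul_isUnit_left this
  -- top-right block of the inverse vanishes
  set N := M⁻¹ with hN
  have hMN : M * N = 1 := Matrix.mul_nonsing_inv M hdet
  have hNblocks : N = fromBlocks N.toBlocks₁₁ N.toBlocks₁₂ N.toBlocks₂₁ N.toBlocks₂₂ :=
    (Matrix.fromBlocks_toBlocks N).symm
  have hN12 : N.toBlocks₁₂ = 0 := by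
    have h12 : (s • 1 - a) * N.toBlocks₁₂ = 0 := by
      have := hMN
      rw [hMblocks, hNblocks, Matrix.fromBlocks_multiply, ← Matrix.fromBlocks_one] at this
      have h := congrArg Matrix.toBlocks₁₂ this
      rw [Matrix.toBlocks_fromBlocks₁₂, Matrix.toBlocks_fromBlocks₁₂] at h
      simpa [Matrix.toBlocks_fromBlocks₁₂] using h
    calc N.toBlocks₁₂ = ((s • 1 - a)⁻¹ * (s • 1 - a)) * N.toBlocks₁₂ := by
          rw [Matrix.nonsing_inv_mul _ hdet11, Matrix.one_mul]
      _ = (s • 1 - a)⁻¹ * ((s • 1 - a) * N.toBlocks₁₂) := by rw [Matrix.mul_assoc]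
      _ = 0 := by rw [h12, Matrix.mul_zero]
  -- assemble
  rw [QG, hQD, hQC, hQB, ← hM, ← hN, hNblocks, hN12]
  rw [Matrix.fromBlocks_multiply, Matrix.fromBlocks_multiply]
  simp [Matrix.fromBlocks_add, Matrix.toBlocks_fromBlocks₁₁]
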